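/- Let h be a finite dimensional Leibniz algebra with basis {e_1,…,e_n}. The map θ ↦ γ(θ), γ(θ)(e_i) = Σ_s θ(x_{si}) e_s, is an isomorphism of monoids from the monoid of algebra homomorphisms A(h) → k under convolution onto the monoid End_Lbz(h) of Leibniz algebra endomorphisms of h under composition. -/

import Mathlib

/-!
A character `θ` of `A(h)` is determined by its matrix `(θ x_{si})`, and the matrices that occur
are exactly those killing the defining polynomials `P_{(a,i,j)}`. In coordinates these relations
say that the matrix, viewed as an endomorphism of `h = kⁿ`, respects the bracket on pairs of basis
vectors, hence everywhere by bilinearity. Under this dictionary `γ(θ)` is the linear map of the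
matrix of `θ`; the formula for `Δ` turns the matrix of a convolution into the product of matrices,
and `ε` has the identity matrix.
-/

open TensorProduct MvPolynomial

/-- The universal polynomial `P_{(a,i,j)} = Σ_u β^u_{ij} X_{au} - Σ_{s,t} τ^a_{st} X_{si} X_{tj}`. -/
noncomputable def univPoly {k : Type*} [Field k] {n : ℕ} {I : Type*}
    (τ : Fin n → Fin n → Fin n → k) (β : I → I → I →₀ k)
    (a : Fin n) (i j : I) : MvPolynomial (Fin n × I) k :=
  (β i j).sum (fun u c => C c * X (a, u)) -
    ∑ s : Fin n, ∑ t : Fin n, C (τ s t a) * X (s, i) * X (t, j)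

/-- The ideal generated by the universal polynomials. -/
noncomputable def univIdeal {k : Type*} [Field k] {n : ℕ} {I : Type*}
    (τ : Fin n → Fin n → Fin n → k) (β : I → I → I →₀ k) :
    Ideal (MvPolynomial (Fin n × I) k) :=
  Ideal.span (Set.range fun p : Fin n × I × I => univPoly τ β p.1 p.2.1 p.2.2)

/-- The universal algebra `A(h,g)`. -/
noncomputable abbrev univAlg {k : Type*} [Field k] {n : ℕ} {I : Type*}
    (τ : Fin n → Fin n → Fin n → k) (β : I → I → I →₀ k) :=
  MvPolynomial (Fin n × I) k ⧸ univIdeal τ β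

/-- The generator `x_{si}` of `A(h,g)`. -/
noncomputable def univGen {k : Type*} [Field k] {n : ℕ} {I : Type*}
    (τ : Fin n → Fin n → Fin n → k) (β : I → I → I →₀ k)
    (s : Fin n) (i : I) : univAlg τ β :=
  Ideal.Quotient.mk (univIdeal τ β) (X (s, i))

/-- The universal ideal of a single `n`-dimensional Leibniz algebra `h`
(with structure constants `τ`), inside `M(n) = k[X_{ij}]`. -/
noncomputable abbrev univIdealH {k : Type*} [Field k] {n : ℕ}
    (τ : Fin n → Fin n → Fin n → k) : Ideal (MvPolynomial (Fin n × Fin n) k) :=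
  univIdeal τ (fun i j => Finsupp.equivFunOnFinite.symm (τ i j))

/-- The universal algebra `A(h) = A(h,h)` of an `n`-dimensional Leibniz algebra. -/
noncomputable abbrev univAlgH {k : Type*} [Field k] {n : ℕ}
    (τ : Fin n → Fin n → Fin n → k) :=
  univAlg τ (fun i j => Finsupp.equivFunOnFinite.symm (τ i j))

/-- The generator `x_{ij}` of `A(h)`. -/
noncomputable abbrev univGenH {k : Type*} [Field k] {n : ℕ}
    (τ : Fin n → Fin n → Fin n → k) (i j : Fin n) : univAlgH τ :=
  univGen τ (fun i j => Finsupp.equivFunOnFinite.symm (τ i j)) i j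

/-- The comultiplication of the matrix bialgebra `M(n) = k[X_{ij}]`:
`Δ(X_{ij}) = Σ_s X_{is} ⊗ X_{sj}`. -/
noncomputable def deltaM (k : Type*) [Field k] (n : ℕ) :
    MvPolynomial (Fin n × Fin n) k →ₐ[k]
      MvPolynomial (Fin n × Fin n) k ⊗[k] MvPolynomial (Fin n × Fin n) k :=
  MvPolynomial.aeval (fun p : Fin n × Fin n =>
    ∑ s : Fin n, MvPolynomial.X (p.1, s) ⊗ₜ[k] MvPolynomial.X (s, p.2))

/-- The counit of the matrix bialgebra `M(n)`: `ε(X_{ij}) = δ_{ij}`. -/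
noncomputable def epsM (k : Type*) [Field k] (n : ℕ) :
    MvPolynomial (Fin n × Fin n) k →ₐ[k] k :=
  MvPolynomial.aeval (fun p : Fin n × Fin n => if p.1 = p.2 then 1 else 0)

/-- The map `γ` sending a character `θ : A(h) → k` to the endomorphism
`γ(θ)(e_i) = Σ_s θ(x_{si}) e_s` of `h = k^n`, i.e. `γ(θ) = (Id ⊗ θ) ∘ η_h` followed
by the canonical isomorphism `h ⊗ k ≅ h`. -/
noncomputable def gammaMap {k : Type*} [Field k] {n : ℕ}
    {τ : Fin n → Fin n → Fin n → k}
    (η : (Fin n → k) →ₗ[k] (Fin n → k) ⊗[k] univAlgH τ)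
    (θ : univAlgH τ →ₐ[k] k) : (Fin n → k) →ₗ[k] (Fin n → k) :=
  (TensorProduct.rid k (Fin n → k)).toLinearMap ∘ₗ
    TensorProduct.map LinearMap.id θ.toLinearMap ∘ₗ η

/-- The convolution product of two linear functionals on `A(h)`, with respect to the
comultiplication `Δ_A`. -/
noncomputable def convMap {k : Type*} [Field k] {n : ℕ}
    {τ : Fin n → Fin n → Fin n → k}
    (ΔA : univAlgH τ →ₐ[k] univAlgH τ ⊗[k] univAlgH τ)
    (θ₁ θ₂ : univAlgH τ →ₗ[k] k) : univAlgH τ →ₗ[k] k :=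
  LinearMap.mul' k k ∘ₗ TensorProduct.map θ₁ θ₂ ∘ₗ ΔA.toLinearMap

namespace LinearMap

variable {R M : Type*} [CommSemiring R] [AddCommMonoid M] [Module R M]
  {ι : Type*} [Fintype ι] [DecidableEq ι]

theorem pi_apply_apply_eq_sum_univ (B : (ι → R) →ₗ[R] (ι → R) →ₗ[R] M) (x y : ι → R) :
    B x y = ∑ s, ∑ t, (x s * y t) • B (Pi.single s 1) (Pi.single t 1) := by
  have hx := (Pi.basisFun R ι).sum_repr x
  have hy := (Pi.basisFun R ι).sum_repr y
  simp only [Pi.basisFun_repr, Pi.basisFun_apply] at hx hy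
  conv_lhs => rw [← hx, ← hy]
  simp only [map_sum, map_smul, sum_apply, smul_apply, Finset.smul_sum,
    smul_smul]
  rw [Finset.sum_comm]
  exact Finset.sum_congr rfl fun s _ => Finset.sum_congr rfl fun t _ => by rw [mul_comm]

theorem forall_map_apply_apply_iff_single (B : (ι → R) →ₗ[R] (ι → R) →ₗ[R] (ι → R))
    (f : (ι → R) →ₗ[R] ι → R) :
    (∀ u v, f (B u v) = B (f u) (f v)) ↔
      ∀ i j, f (B (Pi.single i 1) (Pi.single j 1)) =
        B (f (Pi.single i 1)) (f (Pi.single j 1)) := by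
  refine ⟨fun h i j => h _ _, fun h u v => ?_⟩
  have hB : B.compr₂ f = B.compl₁₂ f f :=
    ext_basis (Pi.basisFun R ι) (Pi.basisFun R ι) fun i j => by simpa using h i j
  exact congr($hB u v)

end LinearMap

section UniversalAlgebra

variable {k : Type*} [Field k] {n : ℕ} {τ : Fin n → Fin n → Fin n → k}

variable (τ) in
/-- Coordinate form of `M [e_i, e_j] = [M e_i, M e_j]`; it is the vanishing of `P_{(a,i,j)}` at `M`. -/
def RespectsStructureConstants (M : Matrix (Fin n) (Fin n) k) : Prop :=
  ∀ a i j, ∑ u, M a u * τ i j u = ∑ s, ∑ t, M s i * M t j * τ s t a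

theorem aeval_univPoly (M : Matrix (Fin n) (Fin n) k) (a i j : Fin n) :
    aeval (fun p => M p.1 p.2)
        (univPoly τ (fun i j => Finsupp.equivFunOnFinite.symm (τ i j)) a i j) =
      ∑ u, M a u * τ i j u - ∑ s, ∑ t, M s i * M t j * τ s t a := by
  rw [univPoly, Finsupp.sum_fintype _ _ fun u => by simp]
  simp [mul_comm, mul_left_comm]

theorem univIdealH_le_ker_aeval_iff (M : Matrix (Fin n) (Fin n) k) :
    univIdealH τ ≤ RingHom.ker (aeval (fun p => M p.1 p.2)) ↔
      RespectsStructureConstants τ M := by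
  simp only [univIdealH, univIdeal, Ideal.span_le, Set.range_subset_iff, SetLike.mem_coe,
    RingHom.mem_ker, Prod.forall, aeval_univPoly, sub_eq_zero, RespectsStructureConstants]

noncomputable def charMatrix (θ : univAlgH τ →ₐ[k] k) : Matrix (Fin n) (Fin n) k :=
  Matrix.of fun s i => θ (univGenH τ s i)

theorem comp_mkₐ_eq_aeval_charMatrix (θ : univAlgH τ →ₐ[k] k) :
    θ.comp (Ideal.Quotient.mkₐ k (univIdealH τ)) = aeval (fun p => charMatrix θ p.1 p.2) :=
  MvPolynomial.algHom_ext fun _ => by simp [charMatrix, univGenH, univGen]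

theorem charMatrix_injective : Function.Injective (charMatrix (τ := τ)) := by
  intro θ θ' h
  apply Ideal.Quotient.algHom_ext
  rw [comp_mkₐ_eq_aeval_charMatrix, comp_mkₐ_eq_aeval_charMatrix, h]

theorem respectsStructureConstants_charMatrix (θ : univAlgH τ →ₐ[k] k) :
    RespectsStructureConstants τ (charMatrix θ) := by
  rw [← univIdealH_le_ker_aeval_iff, ← comp_mkₐ_eq_aeval_charMatrix]
  intro x hx
  simp [RingHom.mem_ker, Ideal.Quotient.eq_zero_iff_mem.2 hx]

theorem exists_charMatrix_eq {M : Matrix (Fin n) (Fin n) k}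
    (hM : RespectsStructureConstants τ M) : ∃ θ : univAlgH τ →ₐ[k] k, charMatrix θ = M := by
  have hker := (univIdealH_le_ker_aeval_iff M).2 hM
  refine ⟨Ideal.Quotient.liftₐ _ _ hker, Matrix.ext fun s i => ?_⟩
  exact (AlgHom.congr_fun (Ideal.Quotient.liftₐ_comp _ _ hker) (X (s, i))).trans (aeval_X _ _)

theorem toLin'_map_bracket_iff {bH : (Fin n → k) →ₗ[k] (Fin n → k) →ₗ[k] (Fin n → k)}
    (hbH : ∀ i j : Fin n, bH (Pi.single i 1) (Pi.single j 1) = fun s => τ i j s)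
    (M : Matrix (Fin n) (Fin n) k) :
    (∀ u v, M.toLin' (bH u v) = bH (M.toLin' u) (M.toLin' v)) ↔
      RespectsStructureConstants τ M := by
  have key : ∀ i j : Fin n, M.toLin' (bH (Pi.single i 1) (Pi.single j 1)) =
      bH (M.toLin' (Pi.single i 1)) (M.toLin' (Pi.single j 1)) ↔
        ∀ a, ∑ u, M a u * τ i j u = ∑ s, ∑ t, M s i * M t j * τ s t a := by
    intro i j
    rw [LinearMap.pi_apply_apply_eq_sum_univ bH (M.toLin' _), funext_iff]
    simp only [Matrix.toLin'_apply, Matrix.mulVec_single_one, hbH, Finset.sum_apply,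
      Pi.smul_apply, smul_eq_mul, Matrix.col_apply]
    rfl
  rw [LinearMap.forall_map_apply_apply_iff_single]
  simp only [key]
  exact ⟨fun h a i j => h i j a, fun h i j a => h a i j⟩

theorem charMatrix_eq_mul_of_convMap {ΔA : univAlgH τ →ₐ[k] univAlgH τ ⊗[k] univAlgH τ}
    (hΔ : ∀ i j : Fin n, ΔA (univGenH τ i j) =
      ∑ s : Fin n, univGenH τ i s ⊗ₜ[k] univGenH τ s j)
    {θ₁ θ₂ θ₃ : univAlgH τ →ₐ[k] k}
    (hθ : θ₃.toLinearMap = convMap ΔA θ₁.toLinearMap θ₂.toLinearMap) :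
    charMatrix θ₃ = charMatrix θ₁ * charMatrix θ₂ :=
  Matrix.ext fun i j => by
    simpa [convMap, hΔ, Matrix.mul_apply, charMatrix] using LinearMap.congr_fun hθ (univGenH τ i j)

theorem charMatrix_eq_one {εA : univAlgH τ →ₐ[k] k}
    (hε : ∀ i j : Fin n, εA (univGenH τ i j) = if i = j then 1 else 0) :
    charMatrix εA = 1 :=
  Matrix.ext fun i j => by simp [charMatrix, hε, Matrix.one_apply]

variable {η : (Fin n → k) →ₗ[k] (Fin n → k) ⊗[k] univAlgH τ}

theorem gammaMap_single (hη : ∀ i : Fin n, η (Pi.single i 1) =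
      ∑ s : Fin n, Pi.single s 1 ⊗ₜ[k] univGenH τ s i)
    (θ : univAlgH τ →ₐ[k] k) (i : Fin n) :
    gammaMap η θ (Pi.single i 1) = ∑ s, θ (univGenH τ s i) • (Pi.single s 1 : Fin n → k) := by
  simp [gammaMap, hη]

theorem gammaMap_eq_toLin' (hη : ∀ i : Fin n, η (Pi.single i 1) =
      ∑ s : Fin n, Pi.single s 1 ⊗ₜ[k] univGenH τ s i)
    (θ : univAlgH τ →ₐ[k] k) :
    gammaMap η θ = (charMatrix θ).toLin' :=
  (Pi.basisFun k (Fin n)).ext fun i => by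
    ext s
    simp [gammaMap_single hη, charMatrix, Pi.single_apply]

end UniversalAlgebra

theorem stmt_16_general (k : Type*) [Field k] (n : ℕ) (τ : Fin n → Fin n → Fin n → k)
    (bH : (Fin n → k) →ₗ[k] (Fin n → k) →ₗ[k] (Fin n → k))
    (hbH : ∀ i j : Fin n, bH (Pi.single i 1) (Pi.single j 1) = fun s => τ i j s)
    (ΔA : univAlgH τ →ₐ[k] univAlgH τ ⊗[k] univAlgH τ) (εA : univAlgH τ →ₐ[k] k)
    (hΔ : ∀ i j : Fin n, ΔA (univGenH τ i j) =
      ∑ s : Fin n, univGenH τ i s ⊗ₜ[k] univGenH τ s j)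
    (hε : ∀ i j : Fin n, εA (univGenH τ i j) = if i = j then 1 else 0)
    (η : (Fin n → k) →ₗ[k] (Fin n → k) ⊗[k] univAlgH τ)
    (hη : ∀ i : Fin n, η (Pi.single i 1) =
      ∑ s : Fin n, Pi.single s 1 ⊗ₜ[k] univGenH τ s i) :
    (∀ (θ : univAlgH τ →ₐ[k] k) (i : Fin n), gammaMap η θ (Pi.single i 1) =
      ∑ s : Fin n, θ (univGenH τ s i) • (Pi.single s 1 : Fin n → k)) ∧
    (∀ θ : univAlgH τ →ₐ[k] k, ∀ u v : Fin n → k,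
      gammaMap η θ (bH u v) = bH (gammaMap η θ u) (gammaMap η θ v)) ∧
    (∀ f : (Fin n → k) →ₗ[k] (Fin n → k),
      (∀ u v : Fin n → k, f (bH u v) = bH (f u) (f v)) →
        ∃! θ : univAlgH τ →ₐ[k] k, gammaMap η θ = f) ∧
    (∀ θ₁ θ₂ θ₃ : univAlgH τ →ₐ[k] k,
      θ₃.toLinearMap = convMap ΔA θ₁.toLinearMap θ₂.toLinearMap →
        gammaMap η θ₃ = gammaMap η θ₁ ∘ₗ gammaMap η θ₂) ∧
    gammaMap η εA = LinearMap.id := by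
  refine ⟨gammaMap_single hη, ?_⟩
  simp only [gammaMap_eq_toLin' hη]
  refine ⟨fun θ => (toLin'_map_bracket_iff hbH _).2 (respectsStructureConstants_charMatrix θ),
    fun f hf => ?_,
    fun θ₁ θ₂ θ₃ hθ => by rw [charMatrix_eq_mul_of_convMap hΔ hθ, Matrix.toLin'_mul],
    by rw [charMatrix_eq_one hε, Matrix.toLin'_one]⟩
  rw [← Matrix.toLin'_toMatrix' f] at hf ⊢
  obtain ⟨θ, hθ⟩ := exists_charMatrix_eq ((toLin'_map_bracket_iff hbH _).1 hf)
  refine ⟨θ, congrArg Matrix.toLin' hθ, fun θ' hθ' => charMatrix_injective ?_⟩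
  rw [hθ, ← Matrix.toLin'.injective.eq_iff, hθ']

/-- `γ : θ ↦ (e_i ↦ Σ_s θ(x_{si}) e_s)` is an isomorphism of monoids
from the algebra characters of `A(h)` under convolution onto the monoid of Leibniz
algebra endomorphisms of `h` under composition: it is given by the stated formula,
lands in Leibniz endomorphisms, is bijective onto them, sends convolution to
composition and the convolution unit `ε` to the identity. -/
theorem stmt_16 (k : Type*) [Field k] (n : ℕ) (τ : Fin n → Fin n → Fin n → k)
    (bH : (Fin n → k) →ₗ[k] (Fin n → k) →ₗ[k] (Fin n → k))
    (hbH : ∀ i j : Fin n, bH (Pi.single i 1) (Pi.single j 1) = fun s => τ i j s)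
    (hLH : ∀ x y z, bH x (bH y z) = bH (bH x y) z - bH (bH x z) y)
    (ΔA : univAlgH τ →ₐ[k] univAlgH τ ⊗[k] univAlgH τ) (εA : univAlgH τ →ₐ[k] k)
    (hΔ : ∀ i j : Fin n, ΔA (univGenH τ i j) =
      ∑ s : Fin n, univGenH τ i s ⊗ₜ[k] univGenH τ s j)
    (hε : ∀ i j : Fin n, εA (univGenH τ i j) = if i = j then 1 else 0)
    (η : (Fin n → k) →ₗ[k] (Fin n → k) ⊗[k] univAlgH τ)
    (hη : ∀ i : Fin n, η (Pi.single i 1) =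
      ∑ s : Fin n, Pi.single s 1 ⊗ₜ[k] univGenH τ s i) :
    (∀ (θ : univAlgH τ →ₐ[k] k) (i : Fin n), gammaMap η θ (Pi.single i 1) =
      ∑ s : Fin n, θ (univGenH τ s i) • (Pi.single s 1 : Fin n → k)) ∧
    (∀ θ : univAlgH τ →ₐ[k] k, ∀ u v : Fin n → k,
      gammaMap η θ (bH u v) = bH (gammaMap η θ u) (gammaMap η θ v)) ∧
    (∀ f : (Fin n → k) →ₗ[k] (Fin n → k),
      (∀ u v : Fin n → k, f (bH u v) = bH (f u) (f v)) →
        ∃! θ : univAlgH τ →ₐ[k] k, gammaMap η θ = f) ∧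
    (∀ θ₁ θ₂ θ₃ : univAlgH τ →ₐ[k] k,
      θ₃.toLinearMap = convMap ΔA θ₁.toLinearMap θ₂.toLinearMap →
        gammaMap η θ₃ = gammaMap η θ₁ ∘ₗ gammaMap η θ₂) ∧
    gammaMap η εA = LinearMap.id :=
  stmt_16_general k n τ bH hbH ΔA εA hΔ hε η hη
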